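/- Let X, Y be independent random vectors in ℝ^d with densities p_X, p_Y ∈ L₂(ℝ^d). Then b_ε(d)^{-1} P(|X − Y| ≤ ε) → ∫_{ℝ^d} p_X(x) p_Y(x) dx as ε → 0+. -/

import Mathlib

/-!
By independence and Tonelli, `P(|X - Y| ≤ ε) = ∫_{|z| ≤ ε} c z dz` with the cross-correlation
`c z = ∫ p_X x * p_Y (z + x) dx`. As `c z = ⟪p_X, p_Y (z + ·)⟫` in `L²` and translation acts
continuously on `L²`, `c` is continuous, so its averages over the balls `|z| ≤ ε` tend to
`c 0 = ∫ p_X p_Y`.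
-/

open MeasureTheory ProbabilityTheory Filter Metric Topology
open scoped ENNReal

section

variable {E : Type*} [NormedAddCommGroup E] [MeasurableSpace E] [BorelSpace E] {μ : Measure E}

theorem setLIntegral_closedBall_eq_setLIntegral_comp_add [μ.IsAddRightInvariant]
    (g : E → ℝ≥0∞) (x : E) (ε : ℝ) :
    ∫⁻ y in closedBall x ε, g y ∂μ = ∫⁻ z in closedBall 0 ε, g (z + x) ∂μ := by
  rw [← (measurePreserving_add_right μ x).setLIntegral_comp_preimage_emb
    (measurableEmbedding_addRight x), preimage_add_right_closedBall, sub_self]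

theorem withDensity_prod_withDensity_setOf_dist_le [SecondCountableTopology E] [SFinite μ]
    [μ.IsAddRightInvariant] {f g : E → ℝ≥0∞} (hf : AEMeasurable f μ) (hg : Measurable g)
    (ε : ℝ) :
    ((μ.withDensity f).prod (μ.withDensity g)) {p | dist p.1 p.2 ≤ ε}
      = ∫⁻ z in closedBall 0 ε, ∫⁻ x, f x * g (z + x) ∂μ ∂μ := by
  have hS : MeasurableSet {p : E × E | dist p.1 p.2 ≤ ε} :=
    measurableSet_le (measurable_fst.dist measurable_snd) measurable_const
  have hg_add : Measurable fun p : E × E => g (p.2 + p.1) :=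
    hg.comp (measurable_snd.add measurable_fst)
  have h_ball (x : E) :
      μ.withDensity g (closedBall x ε) = ∫⁻ z in closedBall 0 ε, g (z + x) ∂μ := by
    rw [withDensity_apply _ measurableSet_closedBall,
      setLIntegral_closedBall_eq_setLIntegral_comp_add]
  calc ((μ.withDensity f).prod (μ.withDensity g)) {p | dist p.1 p.2 ≤ ε}
      = ∫⁻ x, μ.withDensity g (closedBall x ε) ∂μ.withDensity f := by
        rw [Measure.prod_apply hS]
        congr with x
        congr 1 with y
        simp [mem_closedBall, dist_comm]
    _ = ∫⁻ x, f x * ∫⁻ z in closedBall 0 ε, g (z + x) ∂μ ∂μ := by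
        simp_rw [h_ball]
        exact lintegral_withDensity_eq_lintegral_mul₀ hf hg_add.lintegral_prod_right'.aemeasurable
    _ = ∫⁻ x, ∫⁻ z in closedBall 0 ε, f x * g (z + x) ∂μ ∂μ :=
        lintegral_congr fun x => (lintegral_const_mul _ (hg_add.comp measurable_prodMk_left)).symm
    _ = ∫⁻ z in closedBall 0 ε, ∫⁻ x, f x * g (z + x) ∂μ ∂μ :=
        lintegral_lintegral_swap (hf.comp_fst.mul hg_add.aemeasurable)

theorem ofReal_integral_mul_comp_add [μ.IsAddLeftInvariant] {f g : E → ℝ}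
    (hf₀ : ∀ x, 0 ≤ f x) (hg₀ : ∀ x, 0 ≤ g x) (hf : MemLp f 2 μ) (hg : MemLp g 2 μ) (z : E) :
    ENNReal.ofReal (∫ x, f x * g (z + x) ∂μ)
      = ∫⁻ x, ENNReal.ofReal (f x) * ENNReal.ofReal (g (z + x)) ∂μ := by
  have hint : Integrable (fun x => f x * g (z + x)) μ :=
    hf.integrable_mul (hg.comp_measurePreserving (measurePreserving_add_left μ z))
  rw [ofReal_integral_eq_lintegral_ofReal hint (ae_of_all _ fun x => mul_nonneg (hf₀ x) (hg₀ _))]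
  exact lintegral_congr fun x => ENNReal.ofReal_mul (hf₀ x)

theorem ProbabilityTheory.IndepFun.measure_dist_le_eq_setLIntegral [SecondCountableTopology E]
    [SFinite μ] [μ.IsAddLeftInvariant] {Ω : Type*} [MeasurableSpace Ω]
    {P : Measure Ω} [IsFiniteMeasure P] {X Y : Ω → E} (hindep : IndepFun X Y P)
    (hX : Measurable X) (hY : Measurable Y) {pX pY : E → ℝ}
    (hpX₀ : ∀ x, 0 ≤ pX x) (hpY₀ : ∀ x, 0 ≤ pY x) (hpX : MemLp pX 2 μ) (hpY : MemLp pY 2 μ)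
    (hlawX : P.map X = μ.withDensity fun x => ENNReal.ofReal (pX x))
    (hlawY : P.map Y = μ.withDensity fun x => ENNReal.ofReal (pY x)) (ε : ℝ) :
    P {ω | dist (X ω) (Y ω) ≤ ε}
      = ∫⁻ z in closedBall 0 ε, ENNReal.ofReal (∫ x, pX x * pY (z + x) ∂μ) ∂μ := by
  -- Tonelli needs a measurable version of the density of `Y`.
  have hgY := hpY.aestronglyMeasurable.aemeasurable.ennreal_ofReal
  have hlawY' : P.map Y = μ.withDensity (hgY.mk _) :=
    hlawY.trans (withDensity_congr_ae hgY.ae_eq_mk)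
  rw [show {ω | dist (X ω) (Y ω) ≤ ε} = (fun ω => (X ω, Y ω)) ⁻¹' {p | dist p.1 p.2 ≤ ε}
      from rfl, ← Measure.map_apply (hX.prodMk hY)
      (measurableSet_le (measurable_fst.dist measurable_snd) measurable_const),
    (indepFun_iff_map_prod_eq_prod_map_map hX.aemeasurable hY.aemeasurable).1 hindep,
    hlawX, hlawY', withDensity_prod_withDensity_setOf_dist_le
      hpX.aestronglyMeasurable.aemeasurable.ennreal_ofReal hgY.measurable_mk]
  refine lintegral_congr fun z => ?_
  rw [ofReal_integral_mul_comp_add hpX₀ hpY₀ hpX hpY]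
  refine lintegral_congr_ae ?_
  filter_upwards [(measurePreserving_add_left μ z).quasiMeasurePreserving.ae_eq_comp
    hgY.ae_eq_mk] with x hx
  simp only [Function.comp_apply] at hx
  rw [hx]

theorem MeasureTheory.MemLp.continuous_integral_mul_comp_add [μ.IsAddLeftInvariant]
    [IsLocallyFiniteMeasure μ] [μ.InnerRegularCompactLTTop] {f g : E → ℝ}
    (hf : MemLp f 2 μ) (hg : MemLp g 2 μ) :
    Continuous fun z => ∫ x, f x * g (z + x) ∂μ := by
  have : Fact ((2 : ℝ≥0∞) ≠ ∞) := ⟨ENNReal.ofNat_ne_top⟩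
  have h_inner (z : E) :
      ∫ x, f x * g (z + x) ∂μ = inner ℝ (hf.toLp f) (DomAddAct.mk z +ᵥ hg.toLp g) := by
    have hg_add : MemLp (fun x => g (z +ᵥ x)) 2 μ :=
      hg.comp_measurePreserving (measurePreserving_vadd z μ)
    rw [DomAddAct.mk_vadd_toLp, L2.inner_def]
    refine integral_congr_ae ?_
    filter_upwards [hf.coeFn_toLp, hg_add.coeFn_toLp] with x hfx hgx
    rw [hfx, hgx, Real.inner_apply, vadd_eq_add]
  simp_rw [h_inner]
  exact continuous_const.inner (DomAddAct.continuous_mk.vadd continuous_const)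

theorem MeasureTheory.Measure.addHaar_closedBall_eq_addHaar_ball_of_pos [NormedSpace ℝ E]
    [FiniteDimensional ℝ E] (μ : Measure E) [μ.IsAddHaarMeasure] (x : E) {ε : ℝ}
    (hε : 0 < ε) :
    μ (closedBall x ε) = μ (ball x ε) := by
  rcases subsingleton_or_nontrivial E with hE | hE
  · rw [(nonempty_closedBall.2 hε.le).eq_univ, (nonempty_ball.2 hε).eq_univ]
  · exact Measure.addHaar_closedBall_eq_addHaar_ball μ x ε

theorem Continuous.tendsto_setAverage_closedBall [ProperSpace E] [μ.IsOpenPosMeasure]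
    [IsFiniteMeasureOnCompacts μ] {c : E → ℝ} (hc : Continuous c) (x : E) :
    Tendsto (fun ε => ⨍ z in closedBall x ε, c z ∂μ) (𝓝[>] 0) (𝓝 (c x)) := by
  refine nhds_basis_closedBall.tendsto_right_iff.2 fun η hη => ?_
  obtain ⟨δ, hδ, hcδ⟩ := Metric.continuous_iff.1 hc x η hη
  filter_upwards [Ioo_mem_nhdsGT hδ] with ε hε
  refine (convex_closedBall _ _).set_average_mem isClosed_closedBall
    (measure_closedBall_pos μ x hε.1).ne' measure_closedBall_lt_top.ne
    (ae_restrict_of_forall_mem measurableSet_closedBall fun z hz => ?_)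
    (hc.continuousOn.integrableOn_compact (isCompact_closedBall x ε))
  exact (hcδ z ((mem_closedBall.1 hz).trans_lt hε.2)).le

end

theorem eps_coincidence_tendsto_general (d : ℕ)
    {Ω : Type*} [MeasureSpace Ω] [IsProbabilityMeasure (ℙ : Measure Ω)]
    (X Y : Ω → EuclideanSpace ℝ (Fin d)) (hX : Measurable X) (hY : Measurable Y)
    (hindep : IndepFun X Y ℙ)
    (pX pY : EuclideanSpace ℝ (Fin d) → ℝ)
    (hpX0 : ∀ x, 0 ≤ pX x) (hpY0 : ∀ x, 0 ≤ pY x)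
    (hpX2 : MeasureTheory.MemLp pX 2 volume) (hpY2 : MeasureTheory.MemLp pY 2 volume)
    (hlawX : Measure.map X ℙ = volume.withDensity (fun x => ENNReal.ofReal (pX x)))
    (hlawY : Measure.map Y ℙ = volume.withDensity (fun x => ENNReal.ofReal (pY x))) :
    Tendsto
      (fun ε : ℝ =>
        ((volume (Metric.ball (0 : EuclideanSpace ℝ (Fin d)) ε)).toReal)⁻¹
          * (ℙ {ω | dist (X ω) (Y ω) ≤ ε}).toReal)
      (nhdsWithin 0 (Set.Ioi 0)) (nhds (∫ x, pX x * pY x)) := by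
  set c := fun z => ∫ x, pX x * pY (z + x)
  have hc : Continuous c := hpX2.continuous_integral_mul_comp_add hpY2
  have hc₀ : c 0 = ∫ x, pX x * pY x := by simp [c]
  rw [← hc₀]
  refine (hc.tendsto_setAverage_closedBall (μ := volume) 0).congr' ?_
  filter_upwards [self_mem_nhdsWithin] with ε hε
  rw [setAverage_eq, smul_eq_mul, measureReal_def,
    hindep.measure_dist_le_eq_setLIntegral hX hY hpX0 hpY0 hpX2 hpY2 hlawX hlawY,
    Measure.addHaar_closedBall_eq_addHaar_ball_of_pos _ _ hε,
    integral_eq_lintegral_of_nonneg_ae (ae_of_all _ fun z =>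
      integral_nonneg fun x => mul_nonneg (hpX0 x) (hpY0 _)) hc.aestronglyMeasurable]

/-- For independent `X, Y` with densities `p_X, p_Y ∈ L₂(ℝ^d)`,
`b_ε(d)⁻¹ P(|X - Y| ≤ ε) → ∫ p_X p_Y` as `ε → 0+`. -/
theorem eps_coincidence_tendsto (d : ℕ) (hd : 1 ≤ d)
    {Ω : Type*} [MeasureSpace Ω] [IsProbabilityMeasure (ℙ : Measure Ω)]
    (X Y : Ω → EuclideanSpace ℝ (Fin d)) (hX : Measurable X) (hY : Measurable Y)
    (hindep : IndepFun X Y ℙ)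
    (pX pY : EuclideanSpace ℝ (Fin d) → ℝ)
    (hpX0 : ∀ x, 0 ≤ pX x) (hpY0 : ∀ x, 0 ≤ pY x)
    (hpX2 : MeasureTheory.MemLp pX 2 volume) (hpY2 : MeasureTheory.MemLp pY 2 volume)
    (hlawX : Measure.map X ℙ = volume.withDensity (fun x => ENNReal.ofReal (pX x)))
    (hlawY : Measure.map Y ℙ = volume.withDensity (fun x => ENNReal.ofReal (pY x))) :
    Tendsto
      (fun ε : ℝ =>
        ((volume (Metric.ball (0 : EuclideanSpace ℝ (Fin d)) ε)).toReal)⁻¹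
          * (ℙ {ω | dist (X ω) (Y ω) ≤ ε}).toReal)
      (nhdsWithin 0 (Set.Ioi 0)) (nhds (∫ x, pX x * pY x)) :=
  eps_coincidence_tendsto_general d X Y hX hY hindep pX pY hpX0 hpY0 hpX2 hpY2 hlawX hlawY
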